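/- Assume m ≥ 4. Then for all indices h, i, j, k the v-covariant derivative a^{hij}|^k := ∂a^{hij}/∂p_k + ∑_r (a^{rij}C_r^{hk} + a^{hrj}C_r^{ik} + a^{hir}C_r^{jk}) satisfies a^{hij}|^k = ((m−3)/K)·a^{hijk} + (m/(2K))·a^{hij}a^k − ((m−2)/(2K))·[ ∑_r (a_r^{hk}a^{rij} + a_r^{ik}a^{rhj} + a_r^{jk}a^{rhi}) − a^{kij}a^h − a^{hkj}a^i − a^{hik}a^j − a^{ij}a^{hk} − a^{hj}a^{ik} − a^{hi}a^{jk} + 2(a^{ij}a^h a^k + a^{hj}a^i a^k + a^{hi}a^j a^k) ]. -/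

import Mathlib

open Finset

noncomputable section

/-- `A(p) = ∑ a^{i₁…i_m} p_{i₁}⋯p_{i_m}`, where `m = M + 4 ≥ 4`. -/
def Afun {n M : ℕ} (a : (Fin (M + 4) → Fin n) → ℝ) (p : Fin n → ℝ) : ℝ :=
  ∑ ι : Fin (M + 4) → Fin n, a ι * ∏ t, p (ι t)

/-- `K(p) = A(p)^{1/m}`. -/
def Kfun {n M : ℕ} (a : (Fin (M + 4) → Fin n) → ℝ) (p : Fin n → ℝ) : ℝ :=
  Afun a p ^ ((1 : ℝ) / (M + 4))

/-- `a^i = (∑ a^{i i₂…i_m} p_{i₂}⋯p_{i_m}) / K^{m-1}`. -/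
def aU1 {n M : ℕ} (a : (Fin (M + 4) → Fin n) → ℝ) (i : Fin n) (p : Fin n → ℝ) : ℝ :=
  (∑ ι : Fin (M + 3) → Fin n, a (Fin.cons i ι) * ∏ t, p (ι t)) / Kfun a p ^ (M + 3)

/-- `a^{ij} = (∑ a^{i j i₃…i_m} p_{i₃}⋯p_{i_m}) / K^{m-2}`. -/
def aU2 {n M : ℕ} (a : (Fin (M + 4) → Fin n) → ℝ) (i j : Fin n) (p : Fin n → ℝ) : ℝ :=
  (∑ ι : Fin (M + 2) → Fin n, a (Fin.cons i (Fin.cons j ι)) * ∏ t, p (ι t)) / Kfun a p ^ (M + 2)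

/-- `a^{ijk} = (∑ a^{i j k i₄…i_m} p_{i₄}⋯p_{i_m}) / K^{m-3}`. -/
def aU3 {n M : ℕ} (a : (Fin (M + 4) → Fin n) → ℝ) (i j k : Fin n) (p : Fin n → ℝ) : ℝ :=
  (∑ ι : Fin (M + 1) → Fin n, a (Fin.cons i (Fin.cons j (Fin.cons k ι))) * ∏ t, p (ι t)) /
    Kfun a p ^ (M + 1)

/-- `a^{hijk} = (∑ a^{h i j k i₅…i_m} p_{i₅}⋯p_{i_m}) / K^{m-4}`. -/
def aU4 {n M : ℕ} (a : (Fin (M + 4) → Fin n) → ℝ) (h i j k : Fin n) (p : Fin n → ℝ) : ℝ :=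
  (∑ ι : Fin M → Fin n, a (Fin.cons h (Fin.cons i (Fin.cons j (Fin.cons k ι)))) * ∏ t, p (ι t)) /
    Kfun a p ^ M

/-- Partial derivative `∂f/∂p_k` of a function of `p`. -/
def pd {n : ℕ} (f : (Fin n → ℝ) → ℝ) (k : Fin n) (p : Fin n → ℝ) : ℝ :=
  deriv (fun t => f (Function.update p k t)) (p k)

/-- Fundamental metrical d-tensor `g^{ij} = (1/2) ∂²(K²)/∂p_i∂p_j`. -/
def gU {n M : ℕ} (a : (Fin (M + 4) → Fin n) → ℝ) (i j : Fin n) (p : Fin n → ℝ) : ℝ :=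
  (1 / 2 : ℝ) * pd (fun q => pd (fun r => Kfun a r ^ 2) j q) i p

/-- Angular metrical d-tensor `h^{ij} = K ∂²K/∂p_i∂p_j`. -/
def hU {n M : ℕ} (a : (Fin (M + 4) → Fin n) → ℝ) (i j : Fin n) (p : Fin n → ℝ) : ℝ :=
  Kfun a p * pd (fun q => pd (Kfun a) j q) i p

/-- v-torsion d-tensor `C^{ijk} = -(1/2) ∂g^{ij}/∂p_k`. -/
def CU {n M : ℕ} (a : (Fin (M + 4) → Fin n) → ℝ) (i j k : Fin n) (p : Fin n → ℝ) : ℝ :=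
  -(1 / 2 : ℝ) * pd (gU a i j) k p

/-- Symmetry of `a` in all of its `m` indices. -/
def aSym {n M : ℕ} (a : (Fin (M + 4) → Fin n) → ℝ) : Prop :=
  ∀ (σ : Equiv.Perm (Fin (M + 4))) (ι : Fin (M + 4) → Fin n), a (ι ∘ σ) = a ι

/-- `a_i = ∑_s a_{is} a^s`, where `aLow` is the inverse matrix of `(a^{ij})`. -/
def aL {n M : ℕ} (a : (Fin (M + 4) → Fin n) → ℝ) (aLow : Matrix (Fin n) (Fin n) ℝ)
    (p : Fin n → ℝ) (i : Fin n) : ℝ :=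
  ∑ s, aLow i s * aU1 a s p

/-- `a_i^{jk} = ∑_s a_{is} a^{sjk}`. -/
def aL3 {n M : ℕ} (a : (Fin (M + 4) → Fin n) → ℝ) (aLow : Matrix (Fin n) (Fin n) ℝ)
    (p : Fin n → ℝ) (i j k : Fin n) : ℝ :=
  ∑ s, aLow i s * aU3 a s j k p

/-- `g_{ij} = (1/(m-1)) a_{ij} + ((m-2)/(m-1)) a_i a_j`, the inverse of `g^{ij}`. -/
def gL {n M : ℕ} (a : (Fin (M + 4) → Fin n) → ℝ) (aLow : Matrix (Fin n) (Fin n) ℝ)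
    (p : Fin n → ℝ) (i j : Fin n) : ℝ :=
  (1 / (M + 3 : ℝ)) * aLow i j + ((M + 2 : ℝ) / (M + 3)) * aL a aLow p i * aL a aLow p j

/-- v-derivation components `C_i^{jk} = ∑_s g_{is} C^{sjk}`. -/
def CL {n M : ℕ} (a : (Fin (M + 4) → Fin n) → ℝ) (aLow : Matrix (Fin n) (Fin n) ℝ)
    (p : Fin n → ℝ) (i j k : Fin n) : ℝ :=
  ∑ s, gL a aLow p i s * CU a s j k p


/-! Write each `a^{i…}` as `scaledEval a c = (∑_ι c ι ∏_t p_{ι t}) / K^L` for a symmetric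
tensor `c` of arity `L`. Peeling off one index at a time, symmetry gives
`∂_k ∑_ι c ι ∏_t p_{ι t} = L ∑_ι c (k, ι) ∏_t p_{ι t}` together with Euler's relation
`∑_s p_s ∑_ι c (s, ι) ∏_t p_{ι t} = ∑_ι c ι ∏_t p_{ι t}`. With `∂_k K = a^k` this yields
`∂_k a^I = ((m - |I|)/K) (a^{Ik} - a^I a^k)`, hence `g^{ij} = (m-1) a^{ij} - (m-2) a^i a^j`
and a closed form for `C^{ijk}`. Euler's relation also gives `a_i = p_i / K` and `p_s C^{sjk} = 0`,
so lowering an index of `C` with `g_{is}` only sees the `a_{is}/(m-1)` part, and the claimed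
formula becomes a polynomial identity. -/

section TensorEval

variable {n N : ℕ}

def tensorEval (c : (Fin N → Fin n) → ℝ) (p : Fin n → ℝ) : ℝ :=
  ∑ ι : Fin N → Fin n, c ι * ∏ t, p (ι t)

def IsSymmTensor (c : (Fin N → Fin n) → ℝ) : Prop :=
  ∀ (σ : Equiv.Perm (Fin N)) (ι : Fin N → Fin n), c (ι ∘ σ) = c ι

lemma IsSymmTensor.cons {c : (Fin (N + 1) → Fin n) → ℝ} (hc : IsSymmTensor c) (x : Fin n) :
    IsSymmTensor fun ι => c (Fin.cons x ι) := by
  intro σ ι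
  have hcomp : (Fin.cons x ι : Fin (N + 1) → Fin n) ∘ Equiv.Perm.decomposeFin.symm (0, σ) =
      Fin.cons x (ι ∘ σ) := by
    funext t
    cases t using Fin.cases <;> simp
  simp only [← hcomp]
  exact hc _ _

lemma IsSymmTensor.cons_cons_comm {c : (Fin (N + 2) → Fin n) → ℝ} (hc : IsSymmTensor c)
    (x y : Fin n) (ι : Fin N → Fin n) :
    c (Fin.cons x (Fin.cons y ι)) = c (Fin.cons y (Fin.cons x ι)) := by
  have hcomp : (Fin.cons y (Fin.cons x ι) : Fin (N + 2) → Fin n) ∘ Equiv.swap 0 1 =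
      Fin.cons x (Fin.cons y ι) := by
    funext t
    refine Fin.cases ?_ (fun s => Fin.cases ?_ (fun u => ?_) s) t
    · simp
    · simp
    · simp [Equiv.swap_apply_def, Fin.ext_iff]
  rw [← hcomp, hc]

lemma tensorEval_eq_sum_mul_cons (c : (Fin (N + 1) → Fin n) → ℝ) (p : Fin n → ℝ) :
    tensorEval c p = ∑ s, p s * tensorEval (fun ι => c (Fin.cons s ι)) p := by
  rw [tensorEval, ← Fintype.sum_equiv (Fin.consEquiv fun _ => Fin n) _ _ fun _ => rfl,
    Fintype.sum_prod_type]
  refine Finset.sum_congr rfl fun s _ => ?_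
  rw [tensorEval, Finset.mul_sum]
  refine Finset.sum_congr rfl fun ι _ => ?_
  simp only [Fin.consEquiv, Equiv.coe_fn_mk, Fin.prod_univ_succ, Fin.cons_zero, Fin.cons_succ]
  ring

lemma hasDerivAt_tensorEval_update_of_cons (c : (Fin (N + 1) → Fin n) → ℝ) (q : Fin n → ℝ)
    (k : Fin n) (D : Fin n → ℝ)
    (hD : ∀ s, HasDerivAt (fun t => tensorEval (fun ι => c (Fin.cons s ι)) (Function.update q k t))
      (D s) (q k)) :
    HasDerivAt (fun t => tensorEval c (Function.update q k t))
      (tensorEval (fun ι => c (Fin.cons k ι)) q + ∑ s, q s * D s) (q k) := by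
  simp_rw [tensorEval_eq_sum_mul_cons c]
  have hterm := fun s (_ : s ∈ (univ : Finset (Fin n))) =>
    (hasDerivAt_pi.1 (hasDerivAt_update q k (q k)) s).fun_mul (hD s)
  refine (HasDerivAt.fun_sum hterm).congr_deriv ?_
  simp [Finset.sum_add_distrib, Pi.single_apply]

lemma hasDerivAt_tensorEval_update {c : (Fin (N + 1) → Fin n) → ℝ} (hc : IsSymmTensor c)
    (q : Fin n → ℝ) (k : Fin n) :
    HasDerivAt (fun t => tensorEval c (Function.update q k t))
      ((N + 1) * tensorEval (fun ι => c (Fin.cons k ι)) q) (q k) := by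
  induction N with
  | zero =>
    convert hasDerivAt_tensorEval_update_of_cons c q k 0 fun s => ?_ using 1
    · norm_num
    · simpa [tensorEval] using hasDerivAt_const (q k) _
  | succ N ih =>
    convert hasDerivAt_tensorEval_update_of_cons c q k _ fun s => ih (hc.cons s) using 1
    simp only [hc.cons_cons_comm _ k, mul_left_comm (q _) ((N : ℝ) + 1), ← Finset.mul_sum]
    rw [tensorEval_eq_sum_mul_cons (fun ι => c (Fin.cons k ι)) q]
    push_cast
    ring

end TensorEval

section Contraction

variable {n M : ℕ} (a : (Fin (M + 4) → Fin n) → ℝ)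

def scaledEval {L : ℕ} (c : (Fin L → Fin n) → ℝ) (q : Fin n → ℝ) : ℝ :=
  tensorEval c q / Kfun a q ^ L

lemma aU1_eq_scaledEval (i : Fin n) (q : Fin n → ℝ) :
    aU1 a i q = scaledEval a (fun ι => a (Fin.cons i ι)) q := rfl

lemma aU2_eq_scaledEval (i j : Fin n) (q : Fin n → ℝ) :
    aU2 a i j q = scaledEval a (fun ι => a (Fin.cons i (Fin.cons j ι))) q := rfl

lemma aU3_eq_scaledEval (i j k : Fin n) (q : Fin n → ℝ) :
    aU3 a i j k q = scaledEval a (fun ι => a (Fin.cons i (Fin.cons j (Fin.cons k ι)))) q := rfl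

lemma Kfun_pos {q : Fin n → ℝ} (hq : 0 < Afun a q) : 0 < Kfun a q :=
  Real.rpow_pos_of_pos hq _

lemma Kfun_pow_degree {q : Fin n → ℝ} (hq : 0 < Afun a q) : Kfun a q ^ (M + 4) = Afun a q := by
  have hexp : (1 : ℝ) / (M + 4) = ((M + 4 : ℕ) : ℝ)⁻¹ := by push_cast; ring
  rw [Kfun, hexp, Real.rpow_inv_natCast_pow hq.le (by omega)]

lemma hasDerivAt_Kfun_update (ha : IsSymmTensor a) {q : Fin n → ℝ} (hq : 0 < Afun a q)
    (k : Fin n) : HasDerivAt (fun t => Kfun a (Function.update q k t)) (aU1 a k q) (q k) := by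
  have hA := (hasDerivAt_tensorEval_update ha q k).rpow_const (p := 1 / (M + 4))
    (Or.inl (by rw [Function.update_eq_self]; exact hq.ne'))
  simp only [Function.update_eq_self] at hA
  refine hA.congr_deriv ?_
  have hK := Kfun_pos a hq
  have hpow : Afun a q ^ ((1 : ℝ) / (M + 4) - 1) = Kfun a q / Kfun a q ^ (M + 4) := by
    rw [Real.rpow_sub_one hq.ne', Kfun_pow_degree a hq, Kfun]
  change _ * _ * Afun a q ^ _ = _
  rw [hpow, aU1_eq_scaledEval, scaledEval]
  push_cast
  field_simp
  ring

lemma hasDerivAt_scaledEval_update (ha : IsSymmTensor a) {q : Fin n → ℝ} (hq : 0 < Afun a q)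
    {L : ℕ} {c : (Fin (L + 1) → Fin n) → ℝ} (hc : IsSymmTensor c) (k : Fin n) :
    HasDerivAt (fun t => scaledEval a c (Function.update q k t))
      ((L + 1) / Kfun a q *
        (scaledEval a (fun ι => c (Fin.cons k ι)) q - scaledEval a c q * aU1 a k q)) (q k) := by
  have hK := Kfun_pos a hq
  have h := (hasDerivAt_tensorEval_update hc q k).fun_div
    ((hasDerivAt_Kfun_update a ha hq k).fun_pow (L + 1)) (by simp [hK.ne'])
  simp only [Function.update_eq_self, Nat.add_sub_cancel] at h
  refine h.congr_deriv ?_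
  simp only [scaledEval]
  push_cast
  field_simp
  ring

lemma sum_mul_scaledEval_cons {q : Fin n → ℝ} (hK : Kfun a q ≠ 0) {L : ℕ}
    (c : (Fin (L + 1) → Fin n) → ℝ) :
    ∑ s, q s * scaledEval a (fun ι => c (Fin.cons s ι)) q = Kfun a q * scaledEval a c q := by
  simp only [scaledEval, mul_div_assoc', ← Finset.sum_div, ← tensorEval_eq_sum_mul_cons, pow_succ]
  field_simp

end Contraction

section CartanTensors

variable {n M : ℕ} {a : (Fin (M + 4) → Fin n) → ℝ} {q : Fin n → ℝ}

lemma aU2_comm (ha : IsSymmTensor a) (i j : Fin n) :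
    aU2 a i j q = aU2 a j i q := by
  simp only [aU2, ha.cons_cons_comm i j]

lemma aU3_swap12 (ha : IsSymmTensor a) (i j k : Fin n) :
    aU3 a i j k q = aU3 a j i k q := by
  simp only [aU3, ha.cons_cons_comm i j]

lemma aU3_swap23 (ha : IsSymmTensor a) (i j k : Fin n) :
    aU3 a i j k q = aU3 a i k j q := by
  simp only [aU3, (ha.cons i).cons_cons_comm j k]

lemma hasDerivAt_aU1_update (ha : IsSymmTensor a) (hq : 0 < Afun a q) (i k : Fin n) :
    HasDerivAt (fun t => aU1 a i (Function.update q k t))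
      ((M + 3) / Kfun a q * (aU2 a i k q - aU1 a i q * aU1 a k q)) (q k) :=
  (hasDerivAt_scaledEval_update a ha hq (ha.cons i) k).congr_deriv <| by
    simp only [aU1_eq_scaledEval, aU2_eq_scaledEval]
    push_cast
    ring

lemma hasDerivAt_aU2_update (ha : IsSymmTensor a) (hq : 0 < Afun a q) (i j k : Fin n) :
    HasDerivAt (fun t => aU2 a i j (Function.update q k t))
      ((M + 2) / Kfun a q * (aU3 a i j k q - aU2 a i j q * aU1 a k q)) (q k) :=
  (hasDerivAt_scaledEval_update a ha hq ((ha.cons i).cons j) k).congr_deriv <| by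
    simp only [aU2_eq_scaledEval, aU3_eq_scaledEval]
    push_cast
    ring

lemma hasDerivAt_aU3_update (ha : IsSymmTensor a) (hq : 0 < Afun a q) (h i j k : Fin n) :
    HasDerivAt (fun t => aU3 a h i j (Function.update q k t))
      ((M + 1) / Kfun a q * (aU4 a h i j k q - aU3 a h i j q * aU1 a k q)) (q k) :=
  hasDerivAt_scaledEval_update a ha hq (((ha.cons h).cons i).cons j) k

lemma sum_mul_aU1 (hq : 0 < Afun a q) : ∑ s, q s * aU1 a s q = Kfun a q := by
  have hK := Kfun_pos a hq
  have hone : scaledEval a a q = 1 := by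
    change Afun a q / _ = 1
    rw [← Kfun_pow_degree a hq, div_self (by positivity)]
  simp only [aU1_eq_scaledEval]
  rw [sum_mul_scaledEval_cons a hK.ne' a, hone, mul_one]

lemma sum_mul_aU2 (ha : IsSymmTensor a) (hq : 0 < Afun a q) (j : Fin n) :
    ∑ s, q s * aU2 a s j q = Kfun a q * aU1 a j q := by
  simp only [aU2_comm ha _ j, aU2_eq_scaledEval, aU1_eq_scaledEval]
  exact sum_mul_scaledEval_cons a (Kfun_pos a hq).ne' (fun ι => a (Fin.cons j ι))

lemma sum_mul_aU3 (ha : IsSymmTensor a) (hq : 0 < Afun a q) (j k : Fin n) :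
    ∑ s, q s * aU3 a s j k q = Kfun a q * aU2 a j k q := by
  simp only [aU3_swap12 ha _ j, aU3_swap23 ha j _ k, aU3_eq_scaledEval, aU2_eq_scaledEval]
  exact sum_mul_scaledEval_cons a (Kfun_pos a hq).ne' (fun ι => a (Fin.cons j (Fin.cons k ι)))

end CartanTensors

section Metric

variable {n M : ℕ} {a : (Fin (M + 4) → Fin n) → ℝ} {q : Fin n → ℝ}

lemma hasDerivAt_update_of_eq_of_Afun_pos (ha : IsSymmTensor a) (hq : 0 < Afun a q)
    {f g : (Fin n → ℝ) → ℝ} (hfg : ∀ r, 0 < Afun a r → f r = g r) {k : Fin n} {d : ℝ}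
    (hg : HasDerivAt (fun t => g (Function.update q k t)) d (q k)) :
    HasDerivAt (fun t => f (Function.update q k t)) d (q k) := by
  have hpos : 0 < tensorEval a (Function.update q k (q k)) := by
    rw [Function.update_eq_self]; exact hq
  refine hg.congr_of_eventuallyEq ?_
  filter_upwards [(hasDerivAt_tensorEval_update ha q k).continuousAt.eventually (lt_mem_nhds hpos)]
    with t ht using hfg _ ht

lemma pd_Kfun_sq (ha : IsSymmTensor a) (hq : 0 < Afun a q) (j : Fin n) :
    pd (fun r => Kfun a r ^ 2) j q = 2 * Kfun a q * aU1 a j q := by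
  rw [pd, ((hasDerivAt_Kfun_update a ha hq j).fun_pow 2).deriv, Function.update_eq_self]
  ring

lemma gU_eq (ha : IsSymmTensor a) (hq : 0 < Afun a q) (i j : Fin n) :
    gU a i j q = (M + 3) * aU2 a i j q - (M + 2) * (aU1 a i q * aU1 a j q) := by
  have hd := hasDerivAt_update_of_eq_of_Afun_pos ha hq (fun r hr => pd_Kfun_sq ha hr j)
    (((hasDerivAt_Kfun_update a ha hq i).const_mul 2).fun_mul (hasDerivAt_aU1_update ha hq j i))
  rw [gU, pd, hd.deriv, Function.update_eq_self, aU2_comm ha i j]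
  field_simp [(Kfun_pos a hq).ne']
  ring

lemma CU_eq (ha : IsSymmTensor a) (hq : 0 < Afun a q) (s j k : Fin n) :
    CU a s j k q = -((M + 3) * (M + 2) / (2 * Kfun a q)) *
      (aU3 a s j k q - aU2 a s j q * aU1 a k q - aU2 a s k q * aU1 a j q
        - aU2 a j k q * aU1 a s q + 2 * (aU1 a s q * aU1 a j q * aU1 a k q)) := by
  have hd := hasDerivAt_update_of_eq_of_Afun_pos ha hq (fun r hr => gU_eq ha hr s j)
    (((hasDerivAt_aU2_update ha hq s j k).const_mul _).fun_sub
      (((hasDerivAt_aU1_update ha hq s k).fun_mul (hasDerivAt_aU1_update ha hq j k)).const_mul _))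
  rw [CU, pd, hd.deriv, Function.update_eq_self]
  field_simp [(Kfun_pos a hq).ne']
  ring

lemma sum_mul_CU (ha : IsSymmTensor a) (hq : 0 < Afun a q) (w : Fin n → ℝ) (j k : Fin n) :
    ∑ s, w s * CU a s j k q = -((M + 3) * (M + 2) / (2 * Kfun a q)) *
      (∑ s, w s * aU3 a s j k q - aU1 a k q * ∑ s, w s * aU2 a s j q
        - aU1 a j q * ∑ s, w s * aU2 a s k q
        + (2 * aU1 a j q * aU1 a k q - aU2 a j k q) * ∑ s, w s * aU1 a s q) := by
  simp only [CU_eq ha hq, Finset.mul_sum, ← Finset.sum_sub_distrib, ← Finset.sum_add_distrib]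
  exact Finset.sum_congr rfl fun s _ => by ring

lemma sum_mul_CU_eq_zero (ha : IsSymmTensor a) (hq : 0 < Afun a q) (j k : Fin n) :
    ∑ s, q s * CU a s j k q = 0 := by
  rw [sum_mul_CU ha hq, sum_mul_aU3 ha hq, sum_mul_aU2 ha hq, sum_mul_aU2 ha hq, sum_mul_aU1 hq]
  ring

end Metric

section InverseMetric

variable {n M : ℕ} {a : (Fin (M + 4) → Fin n) → ℝ} {p : Fin n → ℝ}
  {aLow : Matrix (Fin n) (Fin n) ℝ}

lemma sum_aLow_mul_aU2 (hInv : aLow * (Matrix.of fun i j => aU2 a i j p) = 1) (i j : Fin n) :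
    ∑ s, aLow i s * aU2 a s j p = if i = j then 1 else 0 := by
  simpa [Matrix.mul_apply, Matrix.one_apply] using congrFun (congrFun hInv i) j

lemma aL_eq (ha : IsSymmTensor a) (hA : 0 < Afun a p)
    (hInv : aLow * (Matrix.of fun i j => aU2 a i j p) = 1) (i : Fin n) :
    aL a aLow p i = p i / Kfun a p := by
  have hvec : (fun s => aU1 a s p) =
      (Kfun a p)⁻¹ • (Matrix.of fun i j => aU2 a i j p).mulVec p := by
    funext s
    have hrow := sum_mul_aU2 ha hA s
    simp only [aU2_comm ha _ s] at hrow
    simp [Matrix.mulVec, dotProduct, mul_comm _ (p _), hrow, (Kfun_pos a hA).ne']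
  calc aL a aLow p i = aLow.mulVec (fun s => aU1 a s p) i := rfl
    _ = p i / Kfun a p := by
      rw [hvec, Matrix.mulVec_smul, Matrix.mulVec_mulVec, hInv, Matrix.one_mulVec]
      simp [div_eq_inv_mul]

lemma CL_eq (ha : IsSymmTensor a) (hA : 0 < Afun a p)
    (hInv : aLow * (Matrix.of fun i j => aU2 a i j p) = 1) (i j k : Fin n) :
    CL a aLow p i j k = -((M + 2) / (2 * Kfun a p)) *
      (aL3 a aLow p i j k - (if i = j then 1 else 0) * aU1 a k p
        - (if i = k then 1 else 0) * aU1 a j p - p i / Kfun a p * aU2 a j k p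
        + 2 * (p i / Kfun a p * aU1 a j p * aU1 a k p)) := by
  have hK := (Kfun_pos a hA).ne'
  have hsplit : ∀ s, gL a aLow p i s * CU a s j k p =
      1 / (M + 3) * (aLow i s * CU a s j k p)
        + (M + 2) / (M + 3) * aL a aLow p i / Kfun a p * (p s * CU a s j k p) := by
    intro s
    rw [gL, aL_eq ha hA hInv s]
    ring
  rw [CL, Finset.sum_congr rfl fun s _ => hsplit s, Finset.sum_add_distrib, ← Finset.mul_sum,
    ← Finset.mul_sum, sum_mul_CU_eq_zero ha hA, sum_mul_CU ha hA, ← aL3, ← aL,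
    sum_aLow_mul_aU2 hInv, sum_aLow_mul_aU2 hInv, aL_eq ha hA hInv]
  field_simp
  ring

lemma sum_aU3_mul_CL (ha : IsSymmTensor a) (hA : 0 < Afun a p)
    (hInv : aLow * (Matrix.of fun i j => aU2 a i j p) = 1) (u v x y : Fin n) :
    ∑ r, aU3 a r u v p * CL a aLow p r x y = -((M + 2) / (2 * Kfun a p)) *
      (∑ r, aL3 a aLow p r x y * aU3 a r u v p - aU3 a x u v p * aU1 a y p
        - aU3 a y u v p * aU1 a x p - aU2 a u v p * aU2 a x y p
        + 2 * (aU2 a u v p * aU1 a x p * aU1 a y p)) := by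
  have hK := (Kfun_pos a hA).ne'
  set κ := -((M + 2) / (2 * Kfun a p) : ℝ)
  have hterm : ∀ r, aU3 a r u v p * CL a aLow p r x y =
      κ * (aL3 a aLow p r x y * aU3 a r u v p)
        - κ * aU1 a y p * (if r = x then aU3 a r u v p else 0)
        - κ * aU1 a x p * (if r = y then aU3 a r u v p else 0)
        + κ / Kfun a p * (2 * aU1 a x p * aU1 a y p - aU2 a x y p) * (p r * aU3 a r u v p) := by
    intro r
    rw [CL_eq ha hA hInv]
    split_ifs <;> ring
  simp only [Finset.sum_congr rfl fun r _ => hterm r, Finset.sum_add_distrib,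
    Finset.sum_sub_distrib, ← Finset.mul_sum, Finset.sum_ite_eq', Finset.mem_univ, if_true,
    sum_mul_aU3 ha hA]
  field_simp
  ring

end InverseMetric

theorem stmt_14_general {n M : ℕ} (a : (Fin (M + 4) → Fin n) → ℝ)
    (hsym : aSym a) (p : Fin n → ℝ) (hA : 0 < Afun a p)
    (aLow : Matrix (Fin n) (Fin n) ℝ)
    (hInv₂ : aLow * (Matrix.of fun i j => aU2 a i j p) = 1) :
    ∀ h i j k : Fin n,
      pd (aU3 a h i j) k p + (∑ r, (aU3 a r i j p * CL a aLow p r h k +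
          aU3 a h r j p * CL a aLow p r i k + aU3 a h i r p * CL a aLow p r j k)) =
        ((M + 1 : ℝ) / Kfun a p) * aU4 a h i j k p +
          ((M + 4 : ℝ) / (2 * Kfun a p)) * (aU3 a h i j p * aU1 a k p) -
          ((M + 2 : ℝ) / (2 * Kfun a p)) *
            ((∑ r, (aL3 a aLow p r h k * aU3 a r i j p +
                aL3 a aLow p r i k * aU3 a r h j p +
                aL3 a aLow p r j k * aU3 a r h i p)) -
              aU3 a k i j p * aU1 a h p - aU3 a h k j p * aU1 a i p -
              aU3 a h i k p * aU1 a j p -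
              aU2 a i j p * aU2 a h k p - aU2 a h j p * aU2 a i k p -
              aU2 a h i p * aU2 a j k p +
              2 * (aU2 a i j p * aU1 a h p * aU1 a k p +
                aU2 a h j p * aU1 a i p * aU1 a k p +
                aU2 a h i p * aU1 a j p * aU1 a k p)) := by
  intro h i j k
  have hsum : ∑ r, (aU3 a r i j p * CL a aLow p r h k +
        aU3 a h r j p * CL a aLow p r i k + aU3 a h i r p * CL a aLow p r j k) =
      ∑ r, aU3 a r i j p * CL a aLow p r h k + ∑ r, aU3 a r h j p * CL a aLow p r i k +
        ∑ r, aU3 a r h i p * CL a aLow p r j k := by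
    rw [← Finset.sum_add_distrib, ← Finset.sum_add_distrib]
    refine Finset.sum_congr rfl fun r _ => ?_
    rw [aU3_swap12 hsym h r j, aU3_swap23 hsym h i r, aU3_swap12 hsym h r i]
  rw [pd, (hasDerivAt_aU3_update hsym hA h i j k).deriv, hsum, sum_aU3_mul_CL hsym hA hInv₂,
    sum_aU3_mul_CL hsym hA hInv₂, sum_aU3_mul_CL hsym hA hInv₂, aU3_swap12 hsym i h j,
    aU3_swap12 hsym k h j, aU3_swap12 hsym j h i, aU3_swap23 hsym h j i, aU3_swap12 hsym k h i,
    aU3_swap23 hsym h k i, Finset.sum_add_distrib, Finset.sum_add_distrib]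
  field_simp [(Kfun_pos a hA).ne']
  ring

/-- for `m = M + 4 ≥ 4`, the v-covariant derivative
`a^{hij}|^k = ∂a^{hij}/∂p_k + ∑_r (a^{rij}C_r^{hk} + a^{hrj}C_r^{ik} + a^{hir}C_r^{jk})`
is given by the formula of Lemma 1 of the paper. -/
theorem stmt_14 {n M : ℕ} (hn : 4 ≤ n) (a : (Fin (M + 4) → Fin n) → ℝ)
    (hsym : aSym a) (p : Fin n → ℝ) (hA : 0 < Afun a p)
    (aLow : Matrix (Fin n) (Fin n) ℝ)
    (hInv₁ : (Matrix.of fun i j => aU2 a i j p) * aLow = 1)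
    (hInv₂ : aLow * (Matrix.of fun i j => aU2 a i j p) = 1) :
    ∀ h i j k : Fin n,
      pd (aU3 a h i j) k p + (∑ r, (aU3 a r i j p * CL a aLow p r h k +
          aU3 a h r j p * CL a aLow p r i k + aU3 a h i r p * CL a aLow p r j k)) =
        ((M + 1 : ℝ) / Kfun a p) * aU4 a h i j k p +
          ((M + 4 : ℝ) / (2 * Kfun a p)) * (aU3 a h i j p * aU1 a k p) -
          ((M + 2 : ℝ) / (2 * Kfun a p)) *
            ((∑ r, (aL3 a aLow p r h k * aU3 a r i j p +
                aL3 a aLow p r i k * aU3 a r h j p +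
                aL3 a aLow p r j k * aU3 a r h i p)) -
              aU3 a k i j p * aU1 a h p - aU3 a h k j p * aU1 a i p -
              aU3 a h i k p * aU1 a j p -
              aU2 a i j p * aU2 a h k p - aU2 a h j p * aU2 a i k p -
              aU2 a h i p * aU2 a j k p +
              2 * (aU2 a i j p * aU1 a h p * aU1 a k p +
                aU2 a h j p * aU1 a i p * aU1 a k p +
                aU2 a h i p * aU1 a j p * aU1 a k p)) :=
  stmt_14_general a hsym p hA aLow hInv₂
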